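/- Rewriting of the functional Q. Assume the matrix denoising model with the supercritical condition, fix i ∈ {1,…,r} and write d = d_i, u = u_i, v = v_i, A = A_i^R, B = B_i^R. With 𝕀^u = I_M ⊕ 0 and 𝕀^l = 0 ⊕ I_n, set A_1 = A 𝕀^u, A_2 = A 𝕀^l, B_1 = B 𝕀^u, B_2 = B 𝕀^l, and for α ∈ {1,2} define f_α = −m_α Tr(H Ξ_1 A_α) + (1 + z m_α) Tr(G A_α) and g_α = −(m_α/2) Tr(H Ξ_2 B_α) + ((1 + z m_α)/2) Tr(G² B_α) + ((z m_α − 1)/(2z)) Tr(G B_α) − m_α′ Tr(B_α) + m_α′ Tr(H Π_1 B_α), where Ξ_2 = G² − Π_2 and all quantities are evaluated at z. Then for z = p(d) + i n^{−C} (C a large fixed constant), Q(z) = √n ( f_1 + f_2 + g_1 + g_2 ) + √(nz) Σ_{(k,l)∈S(ν)} c_{kl}(z) x_{kl} − Δ_d(z). -/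

import Mathlib

open MeasureTheory ProbabilityTheory Filter Matrix
open scoped RealInnerProductSpace

noncomputable section

/-- `λ₊ = (1 + √y)²`. -/
def lamP (y : ℝ) : ℝ := (1 + Real.sqrt y) ^ 2

/-- `λ₋ = (1 − √y)²`. -/
def lamM (y : ℝ) : ℝ := (1 - Real.sqrt y) ^ 2

/-- The Marchenko–Pastur Stieltjes transform `m₁` at real `z > λ₊` (continuous extension
from the upper half-plane of the formula with the principal complex square root). -/
def m1R (y z : ℝ) : ℝ :=
  (1 - y - z + Real.sqrt ((z - lamP y) * (z - lamM y))) / (2 * z * y)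

/-- The Marchenko–Pastur Stieltjes transform `m₂` at real `z > λ₊`. -/
def m2R (y z : ℝ) : ℝ :=
  (y - 1 - z + Real.sqrt ((z - lamP y) * (z - lamM y))) / (2 * z)

/-- `p(d) = (d²+1)(d²+y)/d²`. -/
def pFun (y d : ℝ) : ℝ := (d ^ 2 + 1) * (d ^ 2 + y) / d ^ 2

/-- `a(d) = (d⁴ − y)/(d²(d²+1))`. -/
def aFun (y d : ℝ) : ℝ := (d ^ 4 - y) / (d ^ 2 * (d ^ 2 + 1))

/-- `h_i(x) = x⁴ p′(x) p(x)/(x + d_i)²`. -/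
def hFun (y di x : ℝ) : ℝ := x ^ 4 * deriv (pFun y) x * pFun y x / (x + di) ^ 2

/-- The `√z`-scaled linearization `H(z) = √z [[0, X], [Xᵀ, 0]]` (real spectral parameter). -/
def linHR {M N : ℕ} (X : Matrix (Fin M) (Fin N) ℝ) (z : ℝ) :
    Matrix (Fin M ⊕ Fin N) (Fin M ⊕ Fin N) ℝ :=
  Real.sqrt z • Matrix.fromBlocks 0 X Xᵀ 0

/-- The Green function `G(z) = (H(z) − z I)⁻¹`. -/
def GreenR {M N : ℕ} (X : Matrix (Fin M) (Fin N) ℝ) (z : ℝ) :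
    Matrix (Fin M ⊕ Fin N) (Fin M ⊕ Fin N) ℝ :=
  (linHR X z - z • (1 : Matrix (Fin M ⊕ Fin N) (Fin M ⊕ Fin N) ℝ))⁻¹

/-- `Π₁(z) = m₁(z) I_M ⊕ m₂(z) I_n`. -/
def Pi1R (M N : ℕ) (y z : ℝ) : Matrix (Fin M ⊕ Fin N) (Fin M ⊕ Fin N) ℝ :=
  Matrix.diagonal (Sum.elim (fun _ => m1R y z) (fun _ => m2R y z))

/-- `Ξ₁(z) = G(z) − Π₁(z)`. -/
def Xi1R {M N : ℕ} (X : Matrix (Fin M) (Fin N) ℝ) (y z : ℝ) :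
    Matrix (Fin M ⊕ Fin N) (Fin M ⊕ Fin N) ℝ :=
  GreenR X z - Pi1R M N y z

/-- The derivative `Ξ₁′(z)` of `Ξ₁` in the spectral parameter, taken entrywise. -/
def Xi1R' {M N : ℕ} (X : Matrix (Fin M) (Fin N) ℝ) (y z : ℝ) :
    Matrix (Fin M ⊕ Fin N) (Fin M ⊕ Fin N) ℝ :=
  Matrix.of fun a b => deriv (fun t => Xi1R X y t a b) z

/-- The `(M+n) × 2r` matrix `𝒰 = diag(U, V)`. -/
def calU {M N r : ℕ} (u : Fin r → EuclideanSpace ℝ (Fin M))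
    (v : Fin r → EuclideanSpace ℝ (Fin N)) :
    Matrix (Fin M ⊕ Fin N) (Fin r ⊕ Fin r) ℝ :=
  Matrix.of fun a k =>
    match a, k with
    | Sum.inl a, Sum.inl k => u k a
    | Sum.inr b, Sum.inr k => v k b
    | _, _ => 0

/-- The `2r × 2r` matrix `W_i(x)` with nonzero entries
`(W_i)_{ii} = m₂(x)²`, `(W_i)_{īī} = 1/(d_i²x)`, `(W_i)_{iī} = (W_i)_{īi} = −m₂(x)/(d_i√x)`. -/
def Wmat {r : ℕ} (y : ℝ) (d : Fin r → ℝ) (i : Fin r) (x : ℝ) :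
    Matrix (Fin r ⊕ Fin r) (Fin r ⊕ Fin r) ℝ :=
  Matrix.of fun a b =>
    match a, b with
    | Sum.inl k, Sum.inl l => if k = i ∧ l = i then m2R y x ^ 2 else 0
    | Sum.inr k, Sum.inr l => if k = i ∧ l = i then 1 / (d i ^ 2 * x) else 0
    | Sum.inl k, Sum.inr l => if k = i ∧ l = i then -(m2R y x) / (d i * Real.sqrt x) else 0
    | Sum.inr k, Sum.inl l => if k = i ∧ l = i then -(m2R y x) / (d i * Real.sqrt x) else 0

/-- `M_i(x) = 𝒰 W_i(x) 𝒰ᵀ`. -/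
def MWmat {M N r : ℕ} (y : ℝ) (u : Fin r → EuclideanSpace ℝ (Fin M))
    (v : Fin r → EuclideanSpace ℝ (Fin N)) (d : Fin r → ℝ) (i : Fin r) (x : ℝ) :
    Matrix (Fin M ⊕ Fin N) (Fin M ⊕ Fin N) ℝ :=
  calU u v * Wmat y d i x * (calU u v)ᵀ

/-- `A_i^R = −d_i² ( h_i′(d_i) M_i(p_i) + h_i(d_i) p′(d_i) M_i′(p_i) )`. -/
def ARmat {M N r : ℕ} (y : ℝ) (u : Fin r → EuclideanSpace ℝ (Fin M))
    (v : Fin r → EuclideanSpace ℝ (Fin N)) (d : Fin r → ℝ) (i : Fin r) :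
    Matrix (Fin M ⊕ Fin N) (Fin M ⊕ Fin N) ℝ :=
  (-(d i ^ 2)) •
    (deriv (hFun y (d i)) (d i) • MWmat y u v d i (pFun y (d i))
      + (hFun y (d i) (d i) * deriv (pFun y) (d i)) •
          Matrix.of fun a b => deriv (fun x => MWmat y u v d i x a b) (pFun y (d i)))

/-- `B_i^R = −d_i² h_i(d_i) p′(d_i) M_i(p_i)`. -/
def BRmat {M N r : ℕ} (y : ℝ) (u : Fin r → EuclideanSpace ℝ (Fin M))
    (v : Fin r → EuclideanSpace ℝ (Fin N)) (d : Fin r → ℝ) (i : Fin r) :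
    Matrix (Fin M ⊕ Fin N) (Fin M ⊕ Fin N) ℝ :=
  (-(d i ^ 2 * hFun y (d i) (d i) * deriv (pFun y) (d i))) • MWmat y u v d i (pFun y (d i))

/-- The Marchenko–Pastur Stieltjes transform `m₁` on the upper half-plane, where the square
root is the principal complex square root (branch cut on the negative real axis). -/
def m1C (y : ℝ) (z : ℂ) : ℂ :=
  (1 - (y : ℂ) - z + Complex.I * (((lamP y : ℂ) - z) * (z - (lamM y : ℂ))) ^ ((1 : ℂ) / 2))
    / (2 * z * (y : ℂ))

/-- The Marchenko–Pastur Stieltjes transform `m₂` on the upper half-plane. -/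
def m2C (y : ℝ) (z : ℂ) : ℂ :=
  ((y : ℂ) - 1 - z + Complex.I * (((lamP y : ℂ) - z) * (z - (lamM y : ℂ))) ^ ((1 : ℂ) / 2))
    / (2 * z)

/-- The `√z`-scaled linearization `H(z) = √z [[0, X], [Xᵀ, 0]]` (complex spectral
parameter, principal square root). -/
def linHC {M N : ℕ} (X : Matrix (Fin M) (Fin N) ℝ) (z : ℂ) :
    Matrix (Fin M ⊕ Fin N) (Fin M ⊕ Fin N) ℂ :=
  z ^ ((1 : ℂ) / 2) •
    Matrix.fromBlocks 0 (X.map (fun t => (t : ℂ))) (X.map (fun t => (t : ℂ)))ᵀ 0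

/-- The Green function `G(z) = (H(z) − z I)⁻¹`. -/
def GC {M N : ℕ} (X : Matrix (Fin M) (Fin N) ℝ) (z : ℂ) :
    Matrix (Fin M ⊕ Fin N) (Fin M ⊕ Fin N) ℂ :=
  (linHC X z - z • (1 : Matrix (Fin M ⊕ Fin N) (Fin M ⊕ Fin N) ℂ))⁻¹

/-- `Π₁(z) = m₁(z) I_M ⊕ m₂(z) I_n`. -/
def Pi1C (M N : ℕ) (y : ℝ) (z : ℂ) : Matrix (Fin M ⊕ Fin N) (Fin M ⊕ Fin N) ℂ :=
  Matrix.diagonal (Sum.elim (fun _ => m1C y z) (fun _ => m2C y z))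

/-- The entrywise derivative `Π₁′(z)`. -/
def Pi1C' (M N : ℕ) (y : ℝ) (z : ℂ) : Matrix (Fin M ⊕ Fin N) (Fin M ⊕ Fin N) ℂ :=
  Matrix.diagonal (Sum.elim (fun _ => deriv (m1C y) z) (fun _ => deriv (m2C y) z))

/-- `Π₂ = 2Π₁′ + Π₁/z`. -/
def Pi2C (M N : ℕ) (y : ℝ) (z : ℂ) : Matrix (Fin M ⊕ Fin N) (Fin M ⊕ Fin N) ℂ :=
  Matrix.diagonal (Sum.elim (fun _ => 2 * deriv (m1C y) z + m1C y z / z)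
    (fun _ => 2 * deriv (m2C y) z + m2C y z / z))

/-- `Ξ₁(z) = G(z) − Π₁(z)`. -/
def Xi1C {M N : ℕ} (X : Matrix (Fin M) (Fin N) ℝ) (y : ℝ) (z : ℂ) :
    Matrix (Fin M ⊕ Fin N) (Fin M ⊕ Fin N) ℂ :=
  GC X z - Pi1C M N y z

/-- The derivative `Ξ₁′(z)` of `Ξ₁` in the spectral parameter, taken entrywise. -/
def Xi1C' {M N : ℕ} (X : Matrix (Fin M) (Fin N) ℝ) (y : ℝ) (z : ℂ) :
    Matrix (Fin M ⊕ Fin N) (Fin M ⊕ Fin N) ℂ :=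
  Matrix.of fun a b => deriv (fun w => Xi1C X y w a b) z

/-- `Ξ₂(z) = G(z)² − Π₂(z)`. -/
def Xi2C {M N : ℕ} (X : Matrix (Fin M) (Fin N) ℝ) (y : ℝ) (z : ℂ) :
    Matrix (Fin M ⊕ Fin N) (Fin M ⊕ Fin N) ℂ :=
  GC X z ^ 2 - Pi2C M N y z

/-- The coefficient `c_{kl}(z)`. -/
def cCoeffC {M N : ℕ} (y : ℝ) (z : ℂ) (A B : Matrix (Fin M ⊕ Fin N) (Fin M ⊕ Fin N) ℂ)
    (k : Fin M) (l : Fin N) : ℂ :=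
  -(((Pi1C M N y z * A * Pi1C M N y z) (Sum.inl k) (Sum.inr l)
        - 1 / (2 * z) * (Pi1C M N y z * B * Pi1C M N y z) (Sum.inl k) (Sum.inr l)
        + 1 / 2 * (Pi1C M N y z * B * Pi2C M N y z) (Sum.inl k) (Sum.inr l)
        + 1 / 2 * (Pi2C M N y z * B * Pi1C M N y z) (Sum.inl k) (Sum.inr l))
      + ((Pi1C M N y z * A * Pi1C M N y z) (Sum.inr l) (Sum.inl k)
        - 1 / (2 * z) * (Pi1C M N y z * B * Pi1C M N y z) (Sum.inr l) (Sum.inl k)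
        + 1 / 2 * (Pi1C M N y z * B * Pi2C M N y z) (Sum.inr l) (Sum.inl k)
        + 1 / 2 * (Pi2C M N y z * B * Pi1C M N y z) (Sum.inr l) (Sum.inl k)))

/-- The deterministic shift `Δ_d(z)`. -/
def DeltaDC {M N : ℕ} (y : ℝ) (z : ℂ) (κ₃ : ℝ)
    (A B : Matrix (Fin M ⊕ Fin N) (Fin M ⊕ Fin N) ℂ) : ℂ :=
  -((κ₃ : ℂ) * z ^ ((3 : ℂ) / 2) / (N : ℂ)) *
    ∑ k : Fin M, ∑ l : Fin N,
      (Pi1C M N y z (Sum.inl k) (Sum.inl k) * Pi1C M N y z (Sum.inr l) (Sum.inr l)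
          * (2 * (Pi1C M N y z * A * Pi1C M N y z) (Sum.inl k) (Sum.inr l)
            + (Pi1C M N y z * B * Pi1C' M N y z) (Sum.inl k) (Sum.inr l)
            + (Pi1C' M N y z * B * Pi1C M N y z) (Sum.inl k) (Sum.inr l))
        + 1 / 2 *
          (Pi2C M N y z (Sum.inl k) (Sum.inl k) * Pi1C M N y z (Sum.inr l) (Sum.inr l)
              * ((Pi1C M N y z * B * Pi1C M N y z) (Sum.inl k) (Sum.inr l)
                + (Pi1C M N y z * B * Pi1C M N y z) (Sum.inl k) (Sum.inr l))
            + Pi1C M N y z (Sum.inl k) (Sum.inl k) * Pi2C M N y z (Sum.inr l) (Sum.inr l)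
              * ((Pi1C M N y z * B * Pi1C M N y z) (Sum.inl k) (Sum.inr l)
                + (Pi1C M N y z * B * Pi1C M N y z) (Sum.inl k) (Sum.inr l))
            + Pi1C M N y z (Sum.inl k) (Sum.inl k) * Pi1C M N y z (Sum.inr l) (Sum.inr l)
              * ((Pi1C M N y z * B * Pi2C M N y z) (Sum.inl k) (Sum.inr l)
                + (Pi2C M N y z * B * Pi1C M N y z) (Sum.inl k) (Sum.inr l))))

/-- Membership in the set `B(ν)`: `|u(k)| > n^{−ν}` and `|v(l)| > n^{−ν}`. -/
def bigSet {M N : ℕ} (ν : ℝ) (u : EuclideanSpace ℝ (Fin M)) (v : EuclideanSpace ℝ (Fin N))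
    (k : Fin M) (l : Fin N) : Prop :=
  (N : ℝ) ^ (-ν) < |u k| ∧ (N : ℝ) ^ (-ν) < |v l|

open scoped Classical in
/-- The random part `Δ_r(z) = √(nz) Σ_{(k,l) ∈ B(ν)} x_{kl} c_{kl}(z)`. -/
def DeltaRndC {M N : ℕ} (ν : ℝ) (u : EuclideanSpace ℝ (Fin M)) (v : EuclideanSpace ℝ (Fin N))
    (Xm : Matrix (Fin M) (Fin N) ℝ) (y : ℝ) (z : ℂ)
    (A B : Matrix (Fin M ⊕ Fin N) (Fin M ⊕ Fin N) ℂ) : ℂ :=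
  ((N : ℂ) * z) ^ ((1 : ℂ) / 2) *
    ∑ k : Fin M, ∑ l : Fin N,
      if bigSet ν u v k l then (Xm k l : ℂ) * cCoeffC y z A B k l else 0

/-- `𝒬(z) = √n (Tr(Ξ₁(z) A) + Tr(Ξ₁′(z) B))`. -/
def QcalC {M N : ℕ} (Xm : Matrix (Fin M) (Fin N) ℝ) (y : ℝ) (z : ℂ)
    (A B : Matrix (Fin M ⊕ Fin N) (Fin M ⊕ Fin N) ℂ) : ℂ :=
  (Real.sqrt (N : ℝ) : ℂ) * ((Xi1C Xm y z * A).trace + (Xi1C' Xm y z * B).trace)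

/-- `Q(z) = 𝒬(z) − Δ_r(z) − Δ_d(z)`. -/
def QFunC {M N : ℕ} (ν : ℝ) (u : EuclideanSpace ℝ (Fin M)) (v : EuclideanSpace ℝ (Fin N))
    (Xm : Matrix (Fin M) (Fin N) ℝ) (y : ℝ) (z : ℂ) (κ₃ : ℝ)
    (A B : Matrix (Fin M ⊕ Fin N) (Fin M ⊕ Fin N) ℂ) : ℂ :=
  QcalC Xm y z A B - DeltaRndC ν u v Xm y z A B - DeltaDC y z κ₃ A B

/-- `𝕀ᵘ = I_M ⊕ 0`. -/
def IuMat (M N : ℕ) : Matrix (Fin M ⊕ Fin N) (Fin M ⊕ Fin N) ℂ :=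
  Matrix.diagonal (Sum.elim (fun _ => 1) (fun _ => 0))

/-- `𝕀ˡ = 0 ⊕ I_n`. -/
def IlMat (M N : ℕ) : Matrix (Fin M ⊕ Fin N) (Fin M ⊕ Fin N) ℂ :=
  Matrix.diagonal (Sum.elim (fun _ => 0) (fun _ => 1))

/-- `f_α = −m_α Tr(H Ξ₁ A_α) + (1 + z m_α) Tr(G A_α)`. -/
def fAlpha {M N : ℕ} (Xm : Matrix (Fin M) (Fin N) ℝ) (y : ℝ) (z mα : ℂ)
    (Aα : Matrix (Fin M ⊕ Fin N) (Fin M ⊕ Fin N) ℂ) : ℂ :=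
  -mα * (linHC Xm z * Xi1C Xm y z * Aα).trace + (1 + z * mα) * (GC Xm z * Aα).trace

/-- `g_α = −(m_α/2) Tr(H Ξ₂ B_α) + ((1 + z m_α)/2) Tr(G² B_α) + ((z m_α − 1)/(2z)) Tr(G B_α)
− m_α′ Tr(B_α) + m_α′ Tr(H Π₁ B_α)`. -/
def gAlpha {M N : ℕ} (Xm : Matrix (Fin M) (Fin N) ℝ) (y : ℝ) (z mα mα' : ℂ)
    (Bα : Matrix (Fin M ⊕ Fin N) (Fin M ⊕ Fin N) ℂ) : ℂ :=
  -(mα / 2) * (linHC Xm z * Xi2C Xm y z * Bα).trace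
    + (1 + z * mα) / 2 * ((GC Xm z ^ 2) * Bα).trace
    + (z * mα - 1) / (2 * z) * (GC Xm z * Bα).trace
    - mα' * Bα.trace + mα' * (linHC Xm z * Pi1C M N y z * Bα).trace

/-! For `Im z ≠ 0` the matrix `H(z) − z = √z (H₀ − √z)` is invertible, since `H₀` is Hermitian
and `√z ∉ ℝ`. Hence the resolvent identity `H G = 1 + z G` holds and `G′ = G²/2 − G/(2z)`,
while `Π₁′ = Π₂/2 − Π₁/(2z)` by definition of `Π₂`. The resolvent identity turns `f_α` and
`g_α` into traces of `G`, `G²` and `H Π A`, and summing over `α` with the weights `m_α`,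
`m_α′` reassembles `Π₁` and `Π₁′`. The terms of `Tr(Ξ₁A) + Tr(Ξ₁′B)` left over are traces
`Tr(H C) = √z Σ x_{kl} (C_{l′k} + C_{kl′})`, linear in `X`, and they add up to
`√z Σ x_{kl} c_{kl}`. Splitting this sum along `B(ν)` and `S(ν)` and writing
`√(nz) = √n √z` gives the identity, with `Δ_d` on both sides. -/

local notation "𝕄" M "," N => Matrix (Fin M ⊕ Fin N) (Fin M ⊕ Fin N) ℂ

section RingInverse

variable {𝕜 R : Type*} [NontriviallyNormedField 𝕜] [NormedRing R] [HasSummableGeomSeries R]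
  [NormedAlgebra 𝕜 R]

theorem HasDerivAt.ringInverse {F : 𝕜 → R} {F' : R} {z : 𝕜} (hF : HasDerivAt F F' z)
    (hz : IsUnit (F z)) :
    HasDerivAt (fun w => Ring.inverse (F w))
      (-(Ring.inverse (F z) * F' * Ring.inverse (F z))) z := by
  obtain ⟨u, hu⟩ := hz
  have h := (hu ▸ hasFDerivAt_ringInverse (𝕜 := 𝕜) u).comp_hasDerivAt z hF
  rw [← hu, Ring.inverse_unit]
  exact h

end RingInverse

theorem Matrix.IsHermitian.isUnit_det_sub_smul_one {n : Type*} [Fintype n] [DecidableEq n]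
    {A : Matrix n n ℂ} (hA : A.IsHermitian) {s : ℂ} (hs : s.im ≠ 0) :
    IsUnit (A - s • 1).det := by
  have hdet : (scalar n s - A).det ≠ 0 := by
    rw [← eval_charpoly, hA.charpoly_eq, Polynomial.eval_prod, Finset.prod_ne_zero_iff]
    intro i _ h
    apply hs
    simpa using congrArg Complex.im h
  rw [← neg_sub, det_neg, isUnit_iff_ne_zero]
  simpa [smul_one_eq_diagonal] using hdet

namespace Complex

theorem ne_zero_of_im_ne_zero {z : ℂ} (hz : z.im ≠ 0) : z ≠ 0 :=
  fun h => hz (by simp [h])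

theorem cpow_half_mul_self {z : ℂ} (hz : z ≠ 0) :
    z ^ ((1 : ℂ) / 2) * z ^ ((1 : ℂ) / 2) = z := by
  rw [← cpow_add _ _ hz]
  norm_num

theorem im_cpow_half_ne_zero {z : ℂ} (hz : z.im ≠ 0) : (z ^ ((1 : ℂ) / 2)).im ≠ 0 := by
  intro h
  apply hz
  rw [← cpow_half_mul_self (ne_zero_of_im_ne_zero hz), mul_im, h]
  ring

theorem ofReal_mul_cpow {a : ℝ} (ha : 0 ≤ a) (z c : ℂ) :
    ((a : ℂ) * z) ^ c = (a : ℂ) ^ c * z ^ c := by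
  rcases ha.eq_or_lt with rfl | ha
  · rcases eq_or_ne c 0 with rfl | hc <;> simp [zero_cpow, *]
  rcases eq_or_ne z 0 with rfl | hz
  · rcases eq_or_ne c 0 with rfl | hc <;> simp [zero_cpow, *]
  have ha' : (a : ℂ) ≠ 0 := ofReal_ne_zero.2 ha.ne'
  rw [cpow_def_of_ne_zero (mul_ne_zero ha' hz), log_ofReal_mul ha hz, add_mul, exp_add,
    ofReal_log ha.le, ← cpow_def_of_ne_zero ha', ← cpow_def_of_ne_zero hz]

theorem natCast_mul_cpow_half (n : ℕ) (z : ℂ) :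
    ((n : ℂ) * z) ^ ((1 : ℂ) / 2) = (Real.sqrt n : ℂ) * z ^ ((1 : ℂ) / 2) := by
  rw [← ofReal_natCast, ofReal_mul_cpow n.cast_nonneg, Real.sqrt_eq_rpow,
    ofReal_cpow n.cast_nonneg]
  norm_num

/-- If the product is real, `Re z` is the midpoint of `a` and `b`, and then the product equals
`((a - b) / 2)² + (Im z)² > 0`. -/
theorem sub_mul_sub_mem_slitPlane (a b : ℝ) {z : ℂ} (hz : z.im ≠ 0) :
    ((a : ℂ) - z) * (z - b) ∈ slitPlane := by
  rw [mem_slitPlane_iff]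
  by_cases him : (((a : ℂ) - z) * (z - b)).im = 0
  · left
    have hre : 2 * z.re = a + b := by
      simp only [mul_im, sub_re, ofReal_re, sub_im, ofReal_im, zero_sub] at him
      have h : z.im * (a + b - 2 * z.re) = 0 := by linarith
      rcases mul_eq_zero.1 h with h | h
      · exact absurd h hz
      · linarith
    simp only [mul_re, sub_re, ofReal_re, sub_im, ofReal_im, zero_sub]
    nlinarith [sq_pos_of_ne_zero hz, sq_nonneg (a - b)]
  · exact Or.inr him

end Complex

theorem Fintype.sum_sum_eq_sum_sum_ite_add_sum_sum_ite_not {α β R : Type*} [Fintype α]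
    [Fintype β] [AddCommMonoid R] (p : α → β → Prop) [∀ a b, Decidable (p a b)]
    (f : α → β → R) :
    ∑ a, ∑ b, f a b
      = (∑ a, ∑ b, if p a b then f a b else 0) + ∑ a, ∑ b, if ¬p a b then f a b else 0 := by
  simp only [← Finset.sum_add_distrib]
  refine Finset.sum_congr rfl fun a _ => Finset.sum_congr rfl fun b _ => ?_
  by_cases h : p a b <;> simp [h]

section

variable {M N : ℕ}

def hermitianDilation (Xm : Matrix (Fin M) (Fin N) ℝ) : 𝕄 M, N :=
  fromBlocks 0 (Xm.map (↑)) (Xm.map (↑))ᵀ 0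

theorem isHermitian_hermitianDilation (Xm : Matrix (Fin M) (Fin N) ℝ) :
    (hermitianDilation Xm).IsHermitian := by
  ext a b
  rcases a with a | a <;> rcases b with b | b <;> simp [hermitianDilation]

theorem linHC_eq_smul (Xm : Matrix (Fin M) (Fin N) ℝ) (z : ℂ) :
    linHC Xm z = z ^ ((1 : ℂ) / 2) • hermitianDilation Xm := rfl

theorem isUnit_det_linHC_sub_smul (Xm : Matrix (Fin M) (Fin N) ℝ) {z : ℂ} (hz : z.im ≠ 0) :
    IsUnit (linHC Xm z - z • 1).det := by
  have hz0 := Complex.ne_zero_of_im_ne_zero hz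
  have hs : z ^ ((1 : ℂ) / 2) ≠ 0 := Complex.cpow_ne_zero_iff.2 (Or.inl hz0)
  have hfactor : linHC Xm z - z • 1
      = z ^ ((1 : ℂ) / 2) • (hermitianDilation Xm - z ^ ((1 : ℂ) / 2) • 1) := by
    rw [smul_sub, smul_smul, Complex.cpow_half_mul_self hz0, linHC_eq_smul]
  rw [hfactor, det_smul, IsUnit.mul_iff]
  exact ⟨(isUnit_iff_ne_zero.2 hs).pow _,
    (isHermitian_hermitianDilation Xm).isUnit_det_sub_smul_one (Complex.im_cpow_half_ne_zero hz)⟩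

theorem linHC_mul_GC (Xm : Matrix (Fin M) (Fin N) ℝ) {z : ℂ} (hz : z.im ≠ 0) :
    linHC Xm z * GC Xm z = 1 + z • GC Xm z := by
  have h : (linHC Xm z - z • 1) * GC Xm z = 1 :=
    mul_nonsing_inv _ (isUnit_det_linHC_sub_smul Xm hz)
  rw [sub_mul, smul_mul_assoc, one_mul] at h
  linear_combination (norm := module) h

section Derivative

attribute [local instance] Matrix.linftyOpNormedRing Matrix.linftyOpNormedAlgebra

theorem hasDerivAt_GC (Xm : Matrix (Fin M) (Fin N) ℝ) {z : ℂ} (hz : z.im ≠ 0) :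
    HasDerivAt (GC Xm) ((2 : ℂ)⁻¹ • GC Xm z ^ 2 - (2 * z)⁻¹ • GC Xm z) z := by
  have hz0 := Complex.ne_zero_of_im_ne_zero hz
  have hsqrt : HasDerivAt (fun w : ℂ => w ^ ((1 : ℂ) / 2))
      ((2 * z)⁻¹ * z ^ ((1 : ℂ) / 2)) z := by
    refine (Complex.hasStrictDerivAt_cpow_const (c := (1 : ℂ) / 2)
      (Complex.mem_slitPlane_iff.2 (Or.inr hz))).hasDerivAt.congr_deriv ?_
    have hs : z ^ ((1 : ℂ) / 2) ≠ 0 := Complex.cpow_ne_zero_iff.2 (Or.inl hz0)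
    rw [show (1 : ℂ) / 2 - 1 = -((1 : ℂ) / 2) by norm_num, Complex.cpow_neg]
    field_simp
    rw [sq, Complex.cpow_half_mul_self hz0]
  have hF : HasDerivAt (fun w => linHC Xm w - w • 1) ((2 * z)⁻¹ • linHC Xm z - 1) z := by
    refine ((hsqrt.smul_const (hermitianDilation Xm)).sub
      ((hasDerivAt_id z).smul_const (1 : 𝕄 M, N))).congr_deriv ?_
    rw [linHC_eq_smul, smul_smul, one_smul]
  have hinv := hF.ringInverse ((isUnit_iff_isUnit_det _).2 (isUnit_det_linHC_sub_smul Xm hz))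
  simp only [← nonsing_inv_eq_ringInverse] at hinv
  refine hinv.congr_deriv ?_
  change -(GC Xm z * _ * GC Xm z) = _
  have hzz : (2 * z)⁻¹ * z = 2⁻¹ := by field_simp
  rw [mul_sub, sub_mul, mul_one, mul_smul_comm, smul_mul_assoc, mul_assoc,
    linHC_mul_GC Xm hz, mul_add, mul_one, mul_smul_comm, smul_add, smul_smul, hzz, sq]
  module

theorem hasDerivAt_GC_apply (Xm : Matrix (Fin M) (Fin N) ℝ) {z : ℂ} (hz : z.im ≠ 0)
    (a b : Fin M ⊕ Fin N) :
    HasDerivAt (fun w => GC Xm w a b)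
      (((2 : ℂ)⁻¹ • GC Xm z ^ 2 - (2 * z)⁻¹ • GC Xm z) a b) z :=
  (LinearMap.toContinuousLinearMap (entryLinearMap ℂ ℂ a b)).hasFDerivAt.comp_hasDerivAt z
    (hasDerivAt_GC Xm hz)

end Derivative

theorem differentiableAt_cpow_half_lamP_sub_mul_sub_lamM (y : ℝ) {z : ℂ} (hz : z.im ≠ 0) :
    DifferentiableAt ℂ (fun w => (((lamP y : ℂ) - w) * (w - lamM y)) ^ ((1 : ℂ) / 2)) z := by
  have hinner : DifferentiableAt ℂ (fun w => ((lamP y : ℂ) - w) * (w - lamM y)) z := by fun_prop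
  exact (hinner.hasDerivAt.cpow_const
    (Complex.sub_mul_sub_mem_slitPlane _ _ hz)).differentiableAt

theorem differentiableAt_m1C (y : ℝ) {z : ℂ} (hz : z.im ≠ 0) :
    DifferentiableAt ℂ (m1C y) z := by
  rcases eq_or_ne y 0 with rfl | hy
  · -- the denominator `2 z y` vanishes, so `m1C 0` is the constant `0`
    have hm1 : m1C 0 = fun _ => 0 := by funext w; simp [m1C]
    rw [hm1]
    exact differentiableAt_const _
  · unfold m1C
    exact (((differentiableAt_const _).sub differentiableAt_id).add
      ((differentiableAt_const _).mul (differentiableAt_cpow_half_lamP_sub_mul_sub_lamM y hz))).div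
      (by fun_prop) (by simp [Complex.ne_zero_of_im_ne_zero hz, hy])

theorem differentiableAt_m2C (y : ℝ) {z : ℂ} (hz : z.im ≠ 0) :
    DifferentiableAt ℂ (m2C y) z := by
  unfold m2C
  exact (((differentiableAt_const _).sub differentiableAt_id).add
    ((differentiableAt_const _).mul (differentiableAt_cpow_half_lamP_sub_mul_sub_lamM y hz))).div
    (by fun_prop) (by simp [Complex.ne_zero_of_im_ne_zero hz])

theorem hasDerivAt_Pi1C_apply (y : ℝ) {z : ℂ} (hz : z.im ≠ 0) (a b : Fin M ⊕ Fin N) :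
    HasDerivAt (fun w => Pi1C M N y w a b) (Pi1C' M N y z a b) z := by
  simp only [Pi1C, Pi1C', diagonal_apply]
  split_ifs with hab
  · subst hab
    rcases a with a | a
    · exact (differentiableAt_m1C y hz).hasDerivAt
    · exact (differentiableAt_m2C y hz).hasDerivAt
  · exact hasDerivAt_const _ _

theorem Pi1C'_eq (y : ℝ) {z : ℂ} (hz : z ≠ 0) :
    Pi1C' M N y z = (2 : ℂ)⁻¹ • Pi2C M N y z - (2 * z)⁻¹ • Pi1C M N y z := by
  rw [Pi1C', Pi2C, Pi1C, ← diagonal_smul, ← diagonal_smul, diagonal_sub]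
  congr 1
  ext (a | a) <;> simp <;> field_simp <;> ring

theorem Xi1C'_eq (Xm : Matrix (Fin M) (Fin N) ℝ) (y : ℝ) {z : ℂ} (hz : z.im ≠ 0) :
    Xi1C' Xm y z = (2 : ℂ)⁻¹ • GC Xm z ^ 2 - (2 * z)⁻¹ • GC Xm z - Pi1C' M N y z := by
  ext a b
  exact ((hasDerivAt_GC_apply Xm hz a b).sub (hasDerivAt_Pi1C_apply y hz a b)).deriv

theorem IuMat_add_IlMat : IuMat M N + IlMat M N = 1 := by
  rw [IuMat, IlMat, diagonal_add, ← diagonal_one]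
  congr 1
  ext (a | a) <;> simp

theorem trace_mul_IuMat_add_trace_mul_IlMat (C : 𝕄 M, N) :
    (C * IuMat M N).trace + (C * IlMat M N).trace = C.trace := by
  rw [← trace_add, ← mul_add, IuMat_add_IlMat, mul_one]

theorem mul_trace_mul_IuMat_add_mul_trace_mul_IlMat (C : 𝕄 M, N) (c₁ c₂ : ℂ) :
    c₁ * (C * IuMat M N).trace + c₂ * (C * IlMat M N).trace
      = (C * diagonal (Sum.elim (fun _ => c₁) (fun _ => c₂))).trace := by
  simp only [IuMat, IlMat, trace, diag, mul_diagonal, Fintype.sum_sum_type, Sum.elim_inl,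
    Sum.elim_inr, mul_one, mul_zero, Finset.sum_const_zero, add_zero, zero_add, Finset.mul_sum]
  ring_nf

theorem trace_linHC_mul (Xm : Matrix (Fin M) (Fin N) ℝ) (z : ℂ) (C : 𝕄 M, N) :
    (linHC Xm z * C).trace = z ^ ((1 : ℂ) / 2) * ∑ k : Fin M, ∑ l : Fin N,
      (Xm k l : ℂ) * (C (Sum.inr l) (Sum.inl k) + C (Sum.inl k) (Sum.inr l)) := by
  simp only [trace, diag, mul_apply, linHC, Matrix.smul_apply, Fintype.sum_sum_type,
    fromBlocks_apply₁₁, fromBlocks_apply₁₂, fromBlocks_apply₂₁, fromBlocks_apply₂₂,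
    Matrix.zero_apply, transpose_apply, map_apply, smul_eq_mul, mul_zero, zero_mul,
    Finset.sum_const_zero, add_zero, zero_add, Finset.mul_sum, mul_add, Finset.sum_add_distrib,
    mul_assoc]
  rw [Finset.sum_comm (γ := Fin N), add_comm]

section Rewriting

variable (Xm : Matrix (Fin M) (Fin N) ℝ) (y : ℝ) {z : ℂ}

theorem fAlpha_eq (hz : z.im ≠ 0) (mα : ℂ) (Aα : 𝕄 M, N) :
    fAlpha Xm y z mα Aα = (GC Xm z * Aα).trace - mα * Aα.trace
      + mα * (linHC Xm z * Pi1C M N y z * Aα).trace := by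
  have hH : linHC Xm z * Xi1C Xm y z * Aα
      = Aα + z • (GC Xm z * Aα) - linHC Xm z * Pi1C M N y z * Aα := by
    rw [Xi1C, mul_sub, sub_mul, linHC_mul_GC Xm hz, add_mul, one_mul, smul_mul_assoc]
  rw [fAlpha, hH, trace_sub, trace_add, trace_smul, smul_eq_mul]
  ring

theorem gAlpha_eq (hz : z.im ≠ 0) (mα mα' : ℂ) (Bα : 𝕄 M, N) :
    gAlpha Xm y z mα mα' Bα
      = 2⁻¹ * (GC Xm z ^ 2 * Bα).trace - (2 * z)⁻¹ * (GC Xm z * Bα).trace - mα' * Bα.trace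
        + mα / 2 * (linHC Xm z * Pi2C M N y z * Bα).trace
        + mα' * (linHC Xm z * Pi1C M N y z * Bα).trace := by
  have hz0 := Complex.ne_zero_of_im_ne_zero hz
  have hH : linHC Xm z * Xi2C Xm y z * Bα
      = GC Xm z * Bα + z • (GC Xm z ^ 2 * Bα) - linHC Xm z * Pi2C M N y z * Bα := by
    rw [Xi2C, mul_sub, sub_mul, sq, ← mul_assoc, linHC_mul_GC Xm hz, add_mul, add_mul,
      one_mul, smul_mul_assoc, smul_mul_assoc]
  rw [gAlpha, hH, trace_sub, trace_add, trace_smul, smul_eq_mul]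
  field_simp
  ring

theorem fAlpha_add_fAlpha (hz : z.im ≠ 0) (A : 𝕄 M, N) :
    fAlpha Xm y z (m1C y z) (A * IuMat M N) + fAlpha Xm y z (m2C y z) (A * IlMat M N)
      = (GC Xm z * A).trace - (A * Pi1C M N y z).trace
        + (linHC Xm z * Pi1C M N y z * A * Pi1C M N y z).trace := by
  have hA : m1C y z * (A * IuMat M N).trace + m2C y z * (A * IlMat M N).trace
      = (A * Pi1C M N y z).trace := mul_trace_mul_IuMat_add_mul_trace_mul_IlMat _ _ _
  have hHA : m1C y z * (linHC Xm z * Pi1C M N y z * A * IuMat M N).trace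
        + m2C y z * (linHC Xm z * Pi1C M N y z * A * IlMat M N).trace
      = (linHC Xm z * Pi1C M N y z * A * Pi1C M N y z).trace :=
    mul_trace_mul_IuMat_add_mul_trace_mul_IlMat _ _ _
  rw [fAlpha_eq Xm y hz, fAlpha_eq Xm y hz]
  simp only [← mul_assoc]
  linear_combination hHA - hA + trace_mul_IuMat_add_trace_mul_IlMat (GC Xm z * A)

theorem gAlpha_add_gAlpha (hz : z.im ≠ 0) (B : 𝕄 M, N) :
    gAlpha Xm y z (m1C y z) (deriv (m1C y) z) (B * IuMat M N)
        + gAlpha Xm y z (m2C y z) (deriv (m2C y) z) (B * IlMat M N)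
      = 2⁻¹ * (GC Xm z ^ 2 * B).trace - (2 * z)⁻¹ * (GC Xm z * B).trace
        - (B * Pi1C' M N y z).trace
        + 2⁻¹ * (linHC Xm z * Pi2C M N y z * B * Pi1C M N y z).trace
        + (linHC Xm z * Pi1C M N y z * B * Pi1C' M N y z).trace := by
  have hB : deriv (m1C y) z * (B * IuMat M N).trace + deriv (m2C y) z * (B * IlMat M N).trace
      = (B * Pi1C' M N y z).trace := mul_trace_mul_IuMat_add_mul_trace_mul_IlMat _ _ _
  have hHB₁ : deriv (m1C y) z * (linHC Xm z * Pi1C M N y z * B * IuMat M N).trace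
        + deriv (m2C y) z * (linHC Xm z * Pi1C M N y z * B * IlMat M N).trace
      = (linHC Xm z * Pi1C M N y z * B * Pi1C' M N y z).trace :=
    mul_trace_mul_IuMat_add_mul_trace_mul_IlMat _ _ _
  have hHB₂ : m1C y z * (linHC Xm z * Pi2C M N y z * B * IuMat M N).trace
        + m2C y z * (linHC Xm z * Pi2C M N y z * B * IlMat M N).trace
      = (linHC Xm z * Pi2C M N y z * B * Pi1C M N y z).trace :=
    mul_trace_mul_IuMat_add_mul_trace_mul_IlMat _ _ _
  rw [gAlpha_eq Xm y hz, gAlpha_eq Xm y hz]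
  simp only [← mul_assoc]
  linear_combination hHB₁ - hB + 2⁻¹ * hHB₂
    + 2⁻¹ * trace_mul_IuMat_add_trace_mul_IlMat (GC Xm z ^ 2 * B)
    - (2 * z)⁻¹ * trace_mul_IuMat_add_trace_mul_IlMat (GC Xm z * B)

theorem trace_linHC_Pi_eq_sum_cCoeffC (hz : z.im ≠ 0) (A B : 𝕄 M, N) :
    (linHC Xm z * Pi1C M N y z * A * Pi1C M N y z).trace
        + 2⁻¹ * (linHC Xm z * Pi2C M N y z * B * Pi1C M N y z).trace
        + (linHC Xm z * Pi1C M N y z * B * Pi1C' M N y z).trace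
      = -(z ^ ((1 : ℂ) / 2) * ∑ k : Fin M, ∑ l : Fin N, (Xm k l : ℂ) * cCoeffC y z A B k l) := by
  rw [Pi1C'_eq y (Complex.ne_zero_of_im_ne_zero hz), mul_sub, mul_smul_comm, mul_smul_comm,
    trace_sub, trace_smul, trace_smul]
  simp only [mul_assoc (linHC Xm z), trace_linHC_mul, smul_eq_mul, Finset.mul_sum,
    ← Finset.sum_add_distrib, ← Finset.sum_sub_distrib, ← Finset.sum_neg_distrib]
  refine Finset.sum_congr rfl fun k _ => Finset.sum_congr rfl fun l _ => ?_
  simp only [cCoeffC, mul_assoc]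
  ring

theorem trace_Xi1C_mul_add_trace_Xi1C'_mul (hz : z.im ≠ 0) (A B : 𝕄 M, N) :
    (Xi1C Xm y z * A).trace + (Xi1C' Xm y z * B).trace
      = fAlpha Xm y z (m1C y z) (A * IuMat M N) + fAlpha Xm y z (m2C y z) (A * IlMat M N)
        + gAlpha Xm y z (m1C y z) (deriv (m1C y) z) (B * IuMat M N)
        + gAlpha Xm y z (m2C y z) (deriv (m2C y) z) (B * IlMat M N)
        + z ^ ((1 : ℂ) / 2) * ∑ k : Fin M, ∑ l : Fin N, (Xm k l : ℂ) * cCoeffC y z A B k l := by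
  rw [Xi1C, Xi1C'_eq Xm y hz, sub_mul, sub_mul, sub_mul, trace_sub, trace_sub, trace_sub,
    smul_mul_assoc, smul_mul_assoc, trace_smul, trace_smul, smul_eq_mul, smul_eq_mul,
    trace_mul_comm (Pi1C M N y z), trace_mul_comm (Pi1C' M N y z)]
  linear_combination -fAlpha_add_fAlpha Xm y hz A - gAlpha_add_gAlpha Xm y hz B
    - trace_linHC_Pi_eq_sum_cCoeffC Xm y hz A B

end Rewriting

end

open scoped Classical in
theorem rewriting_of_Q_general
    -- dimensions
    (M : ℕ → ℕ)
    -- signal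
    (r : ℕ) (d : Fin r → ℝ)
    -- noise matrix
    (Ω : ℕ → Type)
    (X : (n : ℕ) → Ω n → Matrix (Fin (M n)) (Fin n) ℝ)
    -- third cumulant of √n x_{ij}
    (κ₃ : ℕ → ℝ)
    -- singular vectors of the signal
    (u : (n : ℕ) → Fin r → EuclideanSpace ℝ (Fin (M n)))
    (v : (n : ℕ) → Fin r → EuclideanSpace ℝ (Fin n))
    -- threshold for the set B(ν)
    (ν : ℝ) :
    -- conclusion
    ∀ i : Fin r, ∃ Cth : ℝ, 0 < Cth ∧ ∀ Cc : ℝ, Cth ≤ Cc → ∀ n : ℕ, 1 ≤ n → ∀ ω : Ω n,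
      let y : ℝ := (M n : ℝ) / (n : ℝ)
      let z : ℂ := (pFun y (d i) : ℂ) + ((n : ℝ) ^ (-Cc) : ℝ) * Complex.I
      let A : Matrix (Fin (M n) ⊕ Fin n) (Fin (M n) ⊕ Fin n) ℂ :=
        (ARmat y (u n) (v n) d i).map (fun t => (t : ℂ))
      let B : Matrix (Fin (M n) ⊕ Fin n) (Fin (M n) ⊕ Fin n) ℂ :=
        (BRmat y (u n) (v n) d i).map (fun t => (t : ℂ))
      QFunC ν (u n i) (v n i) (X n ω) y z (κ₃ n) A B
        = (Real.sqrt n : ℂ) *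
            (fAlpha (X n ω) y z (m1C y z) (A * IuMat (M n) n)
              + fAlpha (X n ω) y z (m2C y z) (A * IlMat (M n) n)
              + gAlpha (X n ω) y z (m1C y z) (deriv (m1C y) z) (B * IuMat (M n) n)
              + gAlpha (X n ω) y z (m2C y z) (deriv (m2C y) z) (B * IlMat (M n) n))
          + ((n : ℂ) * z) ^ ((1 : ℂ) / 2) *
              (∑ k : Fin (M n), ∑ l : Fin n,
                if ¬ bigSet ν (u n i) (v n i) k l
                then cCoeffC y z A B k l * (X n ω k l : ℂ) else 0)
          - DeltaDC y z (κ₃ n) A B := by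
  intro i
  refine ⟨1, one_pos, fun Cc _ n hn ω => ?_⟩
  intro y z A B
  have hz : z.im ≠ 0 := by
    have hε : (0 : ℝ) < (n : ℝ) ^ (-Cc) := Real.rpow_pos_of_pos (by exact_mod_cast hn) _
    simpa [z] using hε.ne'
  simp only [mul_comm (cCoeffC y z A B _ _)]
  rw [QFunC, QcalC, DeltaRndC, trace_Xi1C_mul_add_trace_Xi1C'_mul _ y hz,
    Complex.natCast_mul_cpow_half,
    Fintype.sum_sum_eq_sum_sum_ite_add_sum_sum_ite_not (fun k l => bigSet ν (u n i) (v n i) k l)]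
  ring

open scoped Classical in
/-- **Rewriting of the functional `Q`** (Lemma 5.3 of Bao–Ding–Wang): for
`z = p(d) + i n^{−C}` with `C` a large fixed constant,
`Q(z) = √n (f₁ + f₂ + g₁ + g₂) + √(nz) Σ_{(k,l) ∈ S(ν)} c_{kl}(z) x_{kl} − Δ_d(z)`. -/
theorem rewriting_of_Q
    -- dimensions
    (τ c : ℝ) (hτ0 : 0 < τ) (hτ1 : τ < 1)
    (M : ℕ → ℕ)
    (hdim : ∀ n : ℕ, 1 ≤ n → τ ≤ (M n : ℝ) / (n : ℝ) ∧ (M n : ℝ) / (n : ℝ) ≤ τ⁻¹)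
    (hlim : Tendsto (fun n : ℕ => (M n : ℝ) / (n : ℝ)) atTop (nhds c))
    -- signal
    (r : ℕ) (d : Fin r → ℝ)
    (hd : ∀ i j : Fin r, i < j → d j < d i) (hdpos : ∀ i, 0 < d i)
    -- supercritical condition
    (C₀ δ : ℝ) (hC₀ : 0 < C₀) (hδ : 0 < δ)
    (hlow : ∀ n : ℕ, 1 ≤ n → ∀ i, ((M n : ℝ) / (n : ℝ)) ^ ((1 : ℝ) / 4) + δ ≤ d i)
    (hup : ∀ i, d i ≤ C₀)
    (hgap : ∀ i j : Fin r, i ≠ j → δ ≤ |d i - d j|)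
    -- noise matrix
    (Ω : ℕ → Type) [∀ n, MeasureSpace (Ω n)]
    [∀ n, IsProbabilityMeasure (volume : Measure (Ω n))]
    (X : (n : ℕ) → Ω n → Matrix (Fin (M n)) (Fin n) ℝ)
    (hXmeas : ∀ n (i : Fin (M n)) (j : Fin n), Measurable fun ω => X n ω i j)
    (hXindep : ∀ n, iIndepFun
      (fun (ij : Fin (M n) × Fin n) (ω : Ω n) => X n ω ij.1 ij.2) volume)
    (hXid : ∀ n (ij kl : Fin (M n) × Fin n),
      IdentDistrib (fun ω => X n ω ij.1 ij.2) (fun ω => X n ω kl.1 kl.2) volume volume)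
    (hmean : ∀ n (i : Fin (M n)) (j : Fin n), (∫ ω, X n ω i j) = 0)
    (hvar : ∀ n, 1 ≤ n → ∀ (i : Fin (M n)) (j : Fin n), (∫ ω, (X n ω i j) ^ 2) = 1 / (n : ℝ))
    (Cq : ℕ → ℝ)
    (hmom : ∀ q : ℕ, 3 ≤ q → ∀ n, 1 ≤ n → ∀ (i : Fin (M n)) (j : Fin n),
      (∫ ω, |Real.sqrt n * X n ω i j| ^ q) ≤ Cq q)
    -- third cumulant of √n x_{ij}
    (κ₃ : ℕ → ℝ)
    (hκ₃ : ∀ n, 1 ≤ n → ∀ (i : Fin (M n)) (j : Fin n),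
      κ₃ n = ∫ ω, (Real.sqrt n * X n ω i j) ^ 3)
    -- singular vectors of the signal
    (u : (n : ℕ) → Fin r → EuclideanSpace ℝ (Fin (M n)))
    (v : (n : ℕ) → Fin r → EuclideanSpace ℝ (Fin n))
    (hu : ∀ n, Orthonormal ℝ (u n)) (hv : ∀ n, Orthonormal ℝ (v n))
    -- threshold for the set B(ν)
    (ν : ℝ) (hν : 0 < ν) :
    -- conclusion
    ∀ i : Fin r, ∃ Cth : ℝ, 0 < Cth ∧ ∀ Cc : ℝ, Cth ≤ Cc → ∀ n : ℕ, 1 ≤ n → ∀ ω : Ω n,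
      let y : ℝ := (M n : ℝ) / (n : ℝ)
      let z : ℂ := (pFun y (d i) : ℂ) + ((n : ℝ) ^ (-Cc) : ℝ) * Complex.I
      let A : Matrix (Fin (M n) ⊕ Fin n) (Fin (M n) ⊕ Fin n) ℂ :=
        (ARmat y (u n) (v n) d i).map (fun t => (t : ℂ))
      let B : Matrix (Fin (M n) ⊕ Fin n) (Fin (M n) ⊕ Fin n) ℂ :=
        (BRmat y (u n) (v n) d i).map (fun t => (t : ℂ))
      QFunC ν (u n i) (v n i) (X n ω) y z (κ₃ n) A B
        = (Real.sqrt n : ℂ) *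
            (fAlpha (X n ω) y z (m1C y z) (A * IuMat (M n) n)
              + fAlpha (X n ω) y z (m2C y z) (A * IlMat (M n) n)
              + gAlpha (X n ω) y z (m1C y z) (deriv (m1C y) z) (B * IuMat (M n) n)
              + gAlpha (X n ω) y z (m2C y z) (deriv (m2C y) z) (B * IlMat (M n) n))
          + ((n : ℂ) * z) ^ ((1 : ℂ) / 2) *
              (∑ k : Fin (M n), ∑ l : Fin n,
                if ¬ bigSet ν (u n i) (v n i) k l
                then cCoeffC y z A B k l * (X n ω k l : ℂ) else 0)
          - DeltaDC y z (κ₃ n) A B :=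
  rewriting_of_Q_general M r d Ω X κ₃ u v ν

end
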